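/- The density of coprime lattice points: for the triangle Δ_{p,q} = {(x,y) ∈ (0,∞)² : px + qy ≤ 1} with p,q positive reals, the limit as L → ∞ of (1/L²) times the number of pairs (a,b) of positive integers with gcd(a,b) = 1 lying in L·Δ_{p,q} equals (6/π²)·(1/(2pq)). -/

import Mathlib

/-!
Column `a` of `L·Δ_{p,q}` holds `⌊(L - pa)/q⌋` lattice points, so summing over the columns gives
`N(L) = L² / (2pq) + O(L)` lattice points in `L·Δ_{p,q}`. A point `(a, b)` has `d ∣ gcd(a, b)` iff
it is `d` times a lattice point of `(L/d)·Δ_{p,q}`, so Möbius inversion writes the number of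
coprime points as `∑_d μ(d) N(L/d)`. After division by `L²` the `d`-th term tends to
`μ(d) / (2pq d²)` and is bounded by `1 / (2pq d²)`, so by dominated convergence the limit is
`(∑_d μ(d) / d²) / (2pq)`, and `∑_d μ(d) / d² = 1 / ζ(2) = 6 / π²`.
-/

open Filter Finset Topology ArithmeticFunction
open scoped ArithmeticFunction.Moebius

lemma sum_Icc_one_intCast {A : ℤ} (hA : 0 ≤ A) :
    ∑ a ∈ Icc (1 : ℤ) A, (a : ℝ) = A * (A + 1) / 2 := by
  induction A, hA using Int.leInduction with
  | base => simp
  | succ n hn ih =>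
    rw [← insert_Icc_right_eq_Icc_add_one (by omega), sum_insert (by simp), ih]
    push_cast
    ring

lemma sum_Icc_floor_sub {x : ℝ} (hx : 0 ≤ x) :
    ∑ a ∈ Icc 1 ⌊x⌋, (x - a) = ⌊x⌋ * x - ⌊x⌋ * (⌊x⌋ + 1) / 2 := by
  have hA : 0 ≤ ⌊x⌋ := Int.floor_nonneg.2 hx
  rw [sum_sub_distrib, sum_Icc_one_intCast hA, sum_const, Int.card_Icc, add_sub_cancel_right,
    nsmul_eq_mul, Int.floor_toNat, natCast_floor_eq_intCast_floor hx]

lemma sum_Icc_floor_sub_le {x : ℝ} (hx : 0 ≤ x) : ∑ a ∈ Icc 1 ⌊x⌋, (x - a) ≤ x ^ 2 / 2 := by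
  have hA : (0 : ℝ) ≤ ⌊x⌋ := by exact_mod_cast Int.floor_nonneg.2 hx
  rw [sum_Icc_floor_sub hx]
  nlinarith [sq_nonneg (x - ⌊x⌋)]

lemma sub_le_sum_Icc_floor_sub {x : ℝ} (hx : 0 ≤ x) :
    x ^ 2 / 2 - x / 2 ≤ ∑ a ∈ Icc 1 ⌊x⌋, (x - a) := by
  have h₁ : (⌊x⌋ : ℝ) ≤ x := Int.floor_le x
  have h₂ : x < ⌊x⌋ + 1 := Int.lt_floor_add_one x
  rw [sum_Icc_floor_sub hx]
  nlinarith [mul_nonneg (sub_nonneg.2 h₁) (sub_nonneg.2 h₂.le)]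

lemma card_filter_gcd_eq_one (s : Finset (ℤ × ℤ)) {D : ℕ}
    (hD : ∀ x ∈ s, Int.gcd x.1 x.2 ∈ Icc 1 D) :
    (#{x ∈ s | Int.gcd x.1 x.2 = 1} : ℤ) =
      ∑ d ∈ Icc 1 D, μ d * #{x ∈ s | d ∣ Int.gcd x.1 x.2} := by
  have hsum (x) (hx : x ∈ s) : (if Int.gcd x.1 x.2 = 1 then 1 else 0 : ℤ) =
      ∑ d ∈ Icc 1 D, if d ∣ Int.gcd x.1 x.2 then μ d else 0 := by
    have hg := mem_Icc.1 (hD x hx)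
    have : {d ∈ Icc 1 D | d ∣ Int.gcd x.1 x.2} = (Int.gcd x.1 x.2).divisors := by
      ext d
      simp only [mem_filter, mem_Icc, Nat.mem_divisors]
      constructor
      · rintro ⟨-, hd⟩
        exact ⟨hd, by omega⟩
      · rintro ⟨hd, -⟩
        exact ⟨⟨Nat.pos_of_dvd_of_pos hd (by omega), (Nat.le_of_dvd (by omega) hd).trans hg.2⟩, hd⟩
    rw [← sum_filter, this, ← coe_mul_zeta_apply, moebius_mul_coe_zeta, one_apply]
  rw [natCast_card_filter, sum_congr rfl hsum, sum_comm]
  refine sum_congr rfl fun d _ => ?_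
  rw [← sum_filter, sum_const, nsmul_eq_mul, mul_comm]

lemma tsum_moebius_div_sq : ∑' d : ℕ, (μ d : ℝ) / d ^ 2 = 6 / Real.pi ^ 2 := by
  have h2 : (1 : ℝ) < (2 : ℂ).re := by norm_num
  have hL : LSeries (fun n => (μ n : ℂ)) 2 = 6 / (Real.pi : ℂ) ^ 2 := by
    have := LSeries_one_mul_Lseries_moebius h2
    rw [LSeries_one_eq_riemannZeta h2, riemannZeta_two] at this
    rw [eq_div_iff (by simp [Real.pi_ne_zero])]
    linear_combination 6 * this
  have hterm (n : ℕ) : LSeries.term (fun n => (μ n : ℂ)) 2 n = (((μ n : ℝ) / n ^ 2 : ℝ) : ℂ) := by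
    rcases eq_or_ne n 0 with rfl | hn
    · simp
    · rw [LSeries.term_of_ne_zero hn, Complex.cpow_two]
      push_cast
      rfl
  rw [LSeries, tsum_congr hterm, ← Complex.ofReal_tsum] at hL
  exact_mod_cast hL

lemma tendsto_tsum_moebius_mul_div_sq {f : ℝ → ℝ} {c C : ℝ}
    (hf : Tendsto (fun L => f L / L ^ 2) atTop (𝓝 c))
    (hC : ∀ L, 0 ≤ L → |f L| ≤ C * L ^ 2) :
    Tendsto (fun L => (∑' d : ℕ, μ d * f (L / d)) / L ^ 2) atTop (𝓝 (6 / Real.pi ^ 2 * c)) := by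
  have hlim (d : ℕ) : Tendsto (fun L => μ d * f (L / d) / L ^ 2) atTop (𝓝 (μ d / d ^ 2 * c)) := by
    rcases eq_or_ne d 0 with rfl | hd
    · simp
    have hd' : (0 : ℝ) < d := by positivity
    refine ((hf.comp (tendsto_id.atTop_div_const hd')).const_mul (μ d / d ^ 2 : ℝ)).congr' ?_
    filter_upwards [eventually_ne_atTop 0] with L hL
    simp only [Function.comp_apply, id]
    field_simp
  have hbound : ∀ᶠ L in atTop, ∀ d : ℕ, ‖μ d * f (L / d) / L ^ 2‖ ≤ C / d ^ 2 := by
    filter_upwards [eventually_gt_atTop 0] with L hL d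
    have hμ : |(μ d : ℝ)| ≤ 1 := by exact_mod_cast abs_moebius_le_one
    calc ‖μ d * f (L / d) / L ^ 2‖ = |(μ d : ℝ)| * |f (L / d)| / L ^ 2 := by
          rw [Real.norm_eq_abs, abs_div, abs_mul, abs_of_pos (pow_pos hL 2)]
      _ ≤ 1 * (C * (L / d) ^ 2) / L ^ 2 := by
          gcongr
          exact hC _ (by positivity)
      _ = C / d ^ 2 := by
          field_simp
  have hsum : Summable fun d : ℕ => C / (d : ℝ) ^ 2 :=
    (Real.summable_one_div_nat_pow.2 one_lt_two).mul_left C |>.congr fun d => by ring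
  simpa only [← tsum_div_const, tsum_mul_right, tsum_moebius_div_sq] using
    tendsto_tsum_of_dominated_convergence hsum hlim hbound

noncomputable def trianglePoints (p q L : ℝ) : Finset (ℤ × ℤ) :=
  {x ∈ Icc 1 ⌊L / p⌋ ×ˢ Icc 1 ⌊L / q⌋ | p * x.1 + q * x.2 ≤ L}

variable {p q : ℝ}

lemma mem_trianglePoints (hp : 0 < p) (hq : 0 < q) {L : ℝ} {x : ℤ × ℤ} :
    x ∈ trianglePoints p q L ↔ 0 < x.1 ∧ 0 < x.2 ∧ p * x.1 + q * x.2 ≤ L := by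
  simp only [trianglePoints, mem_filter, mem_product, mem_Icc, Int.le_floor, le_div_iff₀ hp,
    le_div_iff₀ hq, Order.one_le_iff_pos]
  constructor
  · rintro ⟨⟨⟨h1, -⟩, h2, -⟩, h⟩
    exact ⟨h1, h2, h⟩
  · rintro ⟨h1, h2, h⟩
    have : (0 : ℝ) < x.1 := by exact_mod_cast h1
    have : (0 : ℝ) < x.2 := by exact_mod_cast h2
    exact ⟨⟨⟨h1, by nlinarith⟩, h2, by nlinarith⟩, h⟩

lemma card_trianglePoints (hp : 0 < p) (hq : 0 < q) (L : ℝ) :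
    #(trianglePoints p q L) = ∑ a ∈ Icc 1 ⌊L / p⌋, ⌊(L - p * a) / q⌋₊ := by
  rw [trianglePoints, card_filter, sum_product]
  refine sum_congr rfl fun a ha => ?_
  have ha : (0 : ℝ) < a := by exact_mod_cast (mem_Icc.1 ha).1
  have : ({b ∈ Icc 1 ⌊L / q⌋ | p * a + q * b ≤ L} : Finset ℤ) = Icc 1 ⌊(L - p * a) / q⌋ := by
    ext b
    simp only [mem_filter, mem_Icc, Int.le_floor, le_div_iff₀ hq]
    constructor
    · rintro ⟨⟨h1, -⟩, h⟩
      exact ⟨h1, by linarith⟩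
    · rintro ⟨h1, h⟩
      exact ⟨⟨h1, by nlinarith [mul_pos hp ha]⟩, by linarith⟩
  rw [← card_filter, this, Int.card_Icc, add_sub_cancel_right, Int.floor_toNat]

lemma card_trianglePoints_le (hp : 0 < p) (hq : 0 < q) {L : ℝ} (hL : 0 ≤ L) :
    (#(trianglePoints p q L) : ℝ) ≤ L ^ 2 / (2 * p * q) := by
  have hfloor (a) (ha : a ∈ Icc 1 ⌊L / p⌋) : (⌊(L - p * a) / q⌋₊ : ℝ) ≤ p / q * (L / p - a) := by
    have : p * a ≤ L := by
      rw [← le_div_iff₀' hp]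
      exact (Int.cast_le.2 (mem_Icc.1 ha).2).trans (Int.floor_le _)
    calc (⌊(L - p * a) / q⌋₊ : ℝ) ≤ (L - p * a) / q := Nat.floor_le (by bound)
      _ = p / q * (L / p - a) := by field_simp
  calc (#(trianglePoints p q L) : ℝ)
      ≤ p / q * ∑ a ∈ Icc 1 ⌊L / p⌋, (L / p - a) := by
        rw [card_trianglePoints hp hq, Nat.cast_sum, mul_sum]
        exact sum_le_sum hfloor
    _ ≤ p / q * ((L / p) ^ 2 / 2) := by
        gcongr
        exact sum_Icc_floor_sub_le (by positivity)
    _ = L ^ 2 / (2 * p * q) := by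
        field_simp

lemma sub_le_card_trianglePoints (hp : 0 < p) (hq : 0 < q) {L : ℝ} (hL : 0 ≤ L) :
    L ^ 2 / (2 * p * q) - (1 / p + 1 / (2 * q)) * L ≤ #(trianglePoints p q L) := by
  have hcard : ((Icc 1 ⌊L / p⌋).card : ℝ) ≤ L / p := by
    rw [Int.card_Icc, add_sub_cancel_right, Int.floor_toNat]
    exact Nat.floor_le (by positivity)
  calc L ^ 2 / (2 * p * q) - (1 / p + 1 / (2 * q)) * L
      = p / q * ((L / p) ^ 2 / 2 - L / p / 2) - L / p := by
        field_simp
        ring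
    _ ≤ p / q * ∑ a ∈ Icc 1 ⌊L / p⌋, (L / p - a) - (Icc 1 ⌊L / p⌋).card := by
        gcongr
        exact sub_le_sum_Icc_floor_sub (by positivity)
    _ = ∑ a ∈ Icc 1 ⌊L / p⌋, ((L - p * a) / q - 1) := by
        rw [mul_sum, sum_sub_distrib (f := fun a : ℤ => (L - p * a) / q), sum_const, nsmul_one]
        congr 1
        refine sum_congr rfl fun a _ => ?_
        field_simp
    _ ≤ #(trianglePoints p q L) := by
        rw [card_trianglePoints hp hq, Nat.cast_sum]
        exact sum_le_sum fun a _ => (Nat.sub_one_lt_floor _).le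

lemma trianglePoints_eq_empty_of_lt (hp : 0 < p) (hq : 0 < q) {L : ℝ} (hL : L < p) :
    trianglePoints p q L = ∅ := by
  refine eq_empty_of_forall_notMem fun x hx => ?_
  obtain ⟨h1, h2, hx⟩ := (mem_trianglePoints hp hq).1 hx
  have : (1 : ℝ) ≤ x.1 := by exact_mod_cast h1
  have : (0 : ℝ) < x.2 := by exact_mod_cast h2
  nlinarith

lemma filter_dvd_gcd_trianglePoints (hp : 0 < p) (hq : 0 < q) (L : ℝ) {d : ℕ} (hd : 0 < d) :
    {x ∈ trianglePoints p q L | d ∣ Int.gcd x.1 x.2} =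
      (trianglePoints p q (L / d)).image ((d : ℤ) • ·) := by
  have hdZ : (0 : ℤ) < d := by exact_mod_cast hd
  have hdR : (0 : ℝ) < d := by exact_mod_cast hd
  ext ⟨a, b⟩
  simp only [mem_filter, mem_image, mem_trianglePoints hp hq, Int.dvd_gcd_iff, le_div_iff₀ hdR,
    Prod.exists, Prod.smul_mk, smul_eq_mul, Prod.mk.injEq]
  constructor
  · rintro ⟨⟨ha, hb, hL⟩, ⟨a', rfl⟩, ⟨b', rfl⟩⟩
    refine ⟨a', b', ⟨pos_of_mul_pos_right ha hdZ.le, pos_of_mul_pos_right hb hdZ.le, ?_⟩, rfl, rfl⟩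
    push_cast at hL
    linarith
  · rintro ⟨a', b', ⟨ha, hb, hL⟩, rfl, rfl⟩
    refine ⟨⟨mul_pos hdZ ha, mul_pos hdZ hb, ?_⟩, dvd_mul_right _ _, dvd_mul_right _ _⟩
    push_cast
    linarith

lemma card_filter_dvd_gcd_trianglePoints (hp : 0 < p) (hq : 0 < q) (L : ℝ) {d : ℕ} (hd : 0 < d) :
    #{x ∈ trianglePoints p q L | d ∣ Int.gcd x.1 x.2} = #(trianglePoints p q (L / d)) := by
  rw [filter_dvd_gcd_trianglePoints hp hq L hd,
    card_image_of_injective _ (zsmul_right_injective (by omega))]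

lemma tendsto_card_trianglePoints_div_sq (hp : 0 < p) (hq : 0 < q) :
    Tendsto (fun L => (#(trianglePoints p q L) : ℝ) / L ^ 2) atTop (𝓝 (1 / (2 * p * q))) := by
  have hlower : Tendsto (fun L : ℝ => 1 / (2 * p * q) - (1 / p + 1 / (2 * q)) * L⁻¹) atTop
      (𝓝 (1 / (2 * p * q))) := by
    simpa using
      (tendsto_inv_atTop_zero.const_mul (1 / p + 1 / (2 * q))).const_sub (1 / (2 * p * q))
  refine tendsto_of_tendsto_of_tendsto_of_le_of_le' hlower tendsto_const_nhds ?_ ?_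
  · filter_upwards [eventually_gt_atTop 0] with L hL
    rw [le_div_iff₀ (by positivity)]
    calc _ = L ^ 2 / (2 * p * q) - (1 / p + 1 / (2 * q)) * L := by field_simp
      _ ≤ _ := sub_le_card_trianglePoints hp hq hL.le
  · filter_upwards [eventually_gt_atTop 0] with L hL
    rw [div_le_iff₀ (by positivity)]
    exact (card_trianglePoints_le hp hq hL.le).trans_eq (by ring)

lemma card_coprime_trianglePoints (hp : 0 < p) (hq : 0 < q) (L : ℝ) :
    (#{x ∈ trianglePoints p q L | Int.gcd x.1 x.2 = 1} : ℝ) =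
      ∑' d : ℕ, (μ d : ℝ) * #(trianglePoints p q (L / d)) := by
  have hgcd : ∀ x ∈ trianglePoints p q L, Int.gcd x.1 x.2 ∈ Icc 1 ⌊L / p⌋₊ := by
    intro x hx
    obtain ⟨h1, h2, hL⟩ := (mem_trianglePoints hp hq).1 hx
    have hle : ((Int.gcd x.1 x.2 : ℤ) : ℝ) ≤ x.1 := by
      exact_mod_cast Int.le_of_dvd h1 (Int.gcd_dvd_left _ _)
    have : (0 : ℝ) < x.2 := by exact_mod_cast h2
    refine mem_Icc.2 ⟨Int.gcd_pos_of_ne_zero_left _ h1.ne', Nat.le_floor ?_⟩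
    rw [le_div_iff₀' hp]
    push_cast at hle
    nlinarith
  have hvanish : ∀ d ∉ Icc 1 ⌊L / p⌋₊, (μ d : ℝ) * #(trianglePoints p q (L / d)) = 0 := by
    intro d hd
    rcases Nat.eq_zero_or_pos d with rfl | hd0
    · simp
    have hLd : L / d < p := by
      refine (div_lt_comm₀ hp (by positivity)).1 ((Nat.floor_lt' hd0.ne').1 ?_)
      simpa [mem_Icc, Nat.one_le_iff_ne_zero, hd0.ne'] using hd
    rw [trianglePoints_eq_empty_of_lt hp hq hLd, card_empty, Nat.cast_zero, mul_zero]
  rw [tsum_eq_sum hvanish]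
  exact_mod_cast (card_filter_gcd_eq_one _ hgcd).trans
    (sum_congr rfl fun d hd => by rw [card_filter_dvd_gcd_trianglePoints hp hq L (mem_Icc.1 hd).1])

/-- Density of coprime lattice points in dilated triangles: the number of
coprime pairs `(a,b)` of positive integers with `pa + qb ≤ L`, divided by `L²`,
tends to `(6/π²)·(1/(2pq))` as `L → ∞`. -/
theorem coprime_density_in_triangle (p q : ℝ) (hp : 0 < p) (hq : 0 < q) :
    Tendsto
      (fun L : ℝ =>
        ((Set.ncard {ab : ℤ × ℤ | 0 < ab.1 ∧ 0 < ab.2 ∧ Int.gcd ab.1 ab.2 = 1 ∧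
            p * (ab.1 : ℝ) + q * (ab.2 : ℝ) ≤ L}) : ℝ) / L ^ 2)
      atTop
      (nhds (6 / Real.pi ^ 2 * (1 / (2 * p * q)))) := by
  have hset (L : ℝ) : {ab : ℤ × ℤ | 0 < ab.1 ∧ 0 < ab.2 ∧ Int.gcd ab.1 ab.2 = 1 ∧
      p * (ab.1 : ℝ) + q * (ab.2 : ℝ) ≤ L} = ↑{x ∈ trianglePoints p q L | Int.gcd x.1 x.2 = 1} := by
    ext x
    simp only [coe_filter, mem_trianglePoints hp hq, Set.mem_ofPred_eq]
    exact ⟨fun ⟨h1, h2, hg, hL⟩ => ⟨⟨h1, h2, hL⟩, hg⟩, fun ⟨⟨h1, h2, hL⟩, hg⟩ => ⟨h1, h2, hg, hL⟩⟩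
  simp_rw [hset, Set.ncard_coe_finset, card_coprime_trianglePoints hp hq]
  refine tendsto_tsum_moebius_mul_div_sq (f := fun L => #(trianglePoints p q L))
    (C := 1 / (2 * p * q))
    (tendsto_card_trianglePoints_div_sq hp hq) fun L hL => ?_
  rw [Nat.abs_cast]
  exact (card_trianglePoints_le hp hq hL).trans_eq (by ring)
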